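/- arXiv:1802.07178 — 2 statements merged into one kernel-verified Lean document; each statement's English description precedes it below -/
import Mathlib

section
/- Let m be a deficient natural number and p a prime such that gcd(m, p) = 1, p < c(m) (i.e., p·d(m) < σ(m)), and p ≥ σ(q^α) − 1 for every prime power q^α exactly dividing m (α ≥ 1). Then m·p is primitive abundant. -/
/-- The sum of all divisors of `n`. -/
def sigma1 (n : ℕ) : ℕ := ∑ d ∈ n.divisors, d

/-- `n` is abundant if `σ(n) > 2n`. -/
def Abundant (n : ℕ) : Prop := 2 * n < sigma1 n

/-- `n` is deficient if `σ(n) < 2n`. -/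
def Deficient (n : ℕ) : Prop := sigma1 n < 2 * n

/-- A primitive abundant number: abundant and all proper divisors deficient. -/
def PrimitiveAbundant (n : ℕ) : Prop :=
  Abundant n ∧ ∀ d ∈ n.properDivisors, Deficient d

/-- The center of a deficient number `m`: `c(m) = σ(m)/d(m)` where `d(m) = 2m - σ(m)`. -/
def center (n : ℕ) : ℚ := (sigma1 n : ℚ) / (2 * (n : ℚ) - (sigma1 n : ℚ))

lemma sigma1_mul_coprime {a b : ℕ} (h : Nat.Coprime a b) :
    sigma1 (a * b) = sigma1 a * sigma1 b :=
  Nat.Coprime.sum_divisors_mul h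

lemma sigma1_prime {p : ℕ} (hp : p.Prime) : sigma1 p = p + 1 := by
  rw [sigma1, hp.divisors, Finset.sum_pair hp.one_lt.ne]
  omega

lemma sigma1_prime_pow {q : ℕ} (hq : q.Prime) (α : ℕ) :
    sigma1 (q ^ α) = ∑ i ∈ Finset.range (α + 1), q ^ i := by
  rw [sigma1, Nat.sum_divisors_prime_pow hq]

lemma sigma1_prime_pow_succ {q : ℕ} (hq : q.Prime) (α : ℕ) :
    sigma1 (q ^ (α + 1)) = q * sigma1 (q ^ α) + 1 := by
  rw [sigma1_prime_pow hq, sigma1_prime_pow hq, geom_sum_succ]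

lemma one_le_sigma1 {n : ℕ} (hn : 0 < n) : 1 ≤ sigma1 n := by
  have h1 : 1 ∈ n.divisors := Nat.one_mem_divisors.mpr hn.ne'
  exact Finset.single_le_sum (fun i _ => Nat.zero_le i) h1

lemma sigma1_mul_le {d k : ℕ} (hk : 0 < k) : sigma1 d * k ≤ sigma1 (d * k) := by
  rcases Nat.eq_zero_or_pos d with rfl | hd
  · simp [sigma1]
  have hinj : ∀ x ∈ d.divisors, ∀ y ∈ d.divisors, x * k = y * k → x = y := by
    intro x _ y _ h; exact Nat.eq_of_mul_eq_mul_right hk h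
  have hsub : d.divisors.image (· * k) ⊆ (d * k).divisors := by
    intro x hx
    simp only [Finset.mem_image] at hx
    obtain ⟨e, he, rfl⟩ := hx
    rw [Nat.mem_divisors] at he ⊢
    exact ⟨mul_dvd_mul he.1 dvd_rfl, by positivity⟩
  calc sigma1 d * k = ∑ e ∈ d.divisors, e * k := by rw [sigma1, Finset.sum_mul]
  _ = ∑ x ∈ d.divisors.image (· * k), x := (Finset.sum_image (f := fun x => x) (g := fun x => x * k) hinj).symm
  _ ≤ ∑ x ∈ (d * k).divisors, x := Finset.sum_le_sum_of_subset hsub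
  _ = sigma1 (d * k) := rfl

lemma Deficient.of_dvd {d n : ℕ} (hn : 0 < n) (hdvd : d ∣ n) (h : Deficient n) :
    Deficient d := by
  obtain ⟨k, rfl⟩ := hdvd
  have hk : 0 < k := Nat.pos_of_ne_zero (by rintro rfl; simp at hn)
  have h1 : sigma1 d * k ≤ sigma1 (d * k) := sigma1_mul_le hk
  have h2 : sigma1 d * k < (2 * d) * k := by
    calc sigma1 d * k ≤ sigma1 (d * k) := h1
    _ < 2 * (d * k) := h
    _ = (2 * d) * k := by ring
  exact Nat.lt_of_mul_lt_mul_right h2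

/-- If `m` is deficient, `p` is a prime coprime with `m`, `p < c(m)`, and
`p ≥ σ(q^α) − 1` for each prime power `q^α` exactly dividing `m`, then `m·p` is
primitive abundant. -/
theorem stmt8 (m p : ℕ) (hm : 1 ≤ m) (hdef : Deficient m)
    (hp : p.Prime) (hcop : Nat.Coprime m p)
    (hlt : (p : ℚ) < center m)
    (hge : ∀ q α : ℕ, q.Prime → 1 ≤ α → q ^ α ∣ m → ¬ q ^ (α + 1) ∣ m →
      sigma1 (q ^ α) - 1 ≤ p) :
    PrimitiveAbundant (m * p) := by
  have hp0 : 0 < p := hp.pos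
  have hmp0 : 0 < m * p := by positivity
  have hmulmp : sigma1 (m * p) = sigma1 m * (p + 1) := by
    rw [sigma1_mul_coprime hcop, sigma1_prime hp]
  have hdefQ : (sigma1 m : ℚ) < 2 * m := by exact_mod_cast hdef
  have hden : (0:ℚ) < 2 * m - sigma1 m := by linarith
  have hqlt : (p : ℚ) * (2 * m - sigma1 m) < sigma1 m := by
    rw [center] at hlt
    exact (lt_div_iff₀ hden).mp hlt
  constructor
  · -- abundant
    show 2 * (m * p) < sigma1 (m * p)
    rw [hmulmp]
    have : (2 * (m * p) : ℚ) < (sigma1 m : ℚ) * (p + 1) := by nlinarith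
    exact_mod_cast this
  · -- proper divisors deficient
    intro d hd
    obtain ⟨hdvd, hlt'⟩ := Nat.mem_properDivisors.mp hd
    by_cases hpd : p ∣ d
    · -- d = p * e with e a proper divisor of m
      obtain ⟨e, rfl⟩ := hpd
      have hdvd' : e * p ∣ m * p := by rw [mul_comm e p]; exact hdvd
      have he : e ∣ m := (mul_dvd_mul_iff_right hp0.ne').mp hdvd'
      have hem : e ≠ m := by
        rintro rfl
        rw [mul_comm] at hlt'
        exact lt_irrefl _ hlt'
      obtain ⟨k, hk⟩ := he
      have hk2 : 2 ≤ k := by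
        have hk0 : k ≠ 0 := by rintro rfl; simp at hk; omega
        have hk1 : k ≠ 1 := by rintro rfl; simp at hk; exact hem hk.symm
        omega
      set q := k.minFac with hqdef
      have hq : q.Prime := Nat.minFac_prime (by omega)
      have hqk : q ∣ k := Nat.minFac_dvd k
      have hqm : q ∣ m := hk ▸ Dvd.dvd.mul_left hqk e
      set α := m.factorization q with hα
      have hα1 : 1 ≤ α := hq.factorization_pos_of_dvd (by omega) hqm
      have hqα : q ^ α ∣ m := Nat.ordProj_dvd m q
      have hqα1 : ¬ q ^ (α + 1) ∣ m := Nat.pow_succ_factorization_not_dvd (by omega) hq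
      set n := m / q ^ α with hn
      have hmn : q ^ α * n = m := Nat.ordProj_mul_ordCompl_eq_self m q
      have hqn : Nat.Coprime q n := Nat.coprime_ordCompl hq (by omega)
      have hn0 : 0 < n := by
        rcases Nat.eq_zero_or_pos n with h | h
        · rw [h, mul_zero] at hmn; omega
        · exact h
      set s := sigma1 (q ^ (α - 1)) with hs
      set t := sigma1 n with ht
      have hqs : sigma1 (q ^ α) = q * s + 1 := by
        rw [hs]
        have h0 := sigma1_prime_pow_succ hq (α - 1)
        rwa [Nat.sub_add_cancel hα1] at h0
      have hgeqs : q * s ≤ p := by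
        have h0 := hge q α hq hα1 hqα hqα1
        omega
      have hσm : sigma1 m = (q * s + 1) * t := by
        rw [← hmn, sigma1_mul_coprime (Nat.Coprime.pow_left _ hqn), hqs, ht]
      set X := q ^ (α - 1) * n with hX
      have hmX : m = q * X := by
        have h1 : q ^ α = q * q ^ (α - 1) := by
          conv_lhs => rw [show α = (α - 1) + 1 by omega]
          rw [pow_succ']
        rw [hX, ← hmn, h1, mul_assoc]
      have hdefX : (q * s + 1) * t < 2 * (q * X) := by
        have h0 : sigma1 m < 2 * m := hdef
        rw [hσm] at h0
        rw [hmX] at h0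
        exact h0
      have hXp : Deficient (X * p) := by
        have hXdvd : X ∣ m := ⟨q, by rw [hmX]; ring⟩
        have hcopX : Nat.Coprime X p := Nat.Coprime.coprime_dvd_left hXdvd hcop
        have hσXp : sigma1 (X * p) = s * t * (p + 1) := by
          rw [sigma1_mul_coprime hcopX, sigma1_prime hp, hX,
            sigma1_mul_coprime (Nat.Coprime.pow_left _ hqn), ← hs, ← ht]
        show sigma1 (X * p) < 2 * (X * p)
        rw [hσXp]
        have key : q * (s * t * (p + 1)) < q * (2 * (X * p)) := by
          have h' : q * s * t ≤ t * p := by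
            calc q * s * t ≤ p * t := Nat.mul_le_mul_right t hgeqs
            _ = t * p := mul_comm p t
          calc q * (s * t * (p + 1)) = q * s * t + q * s * t * p := by ring
          _ ≤ t * p + q * s * t * p := Nat.add_le_add_right h' _
          _ = ((q * s + 1) * t) * p := by ring
          _ < (2 * (q * X)) * p := (Nat.mul_lt_mul_right hp0).mpr hdefX
          _ = q * (2 * (X * p)) := by ring
        exact Nat.lt_of_mul_lt_mul_left key
      -- e divides X
      have heX : e ∣ X := by
        have h1 : e * q ∣ m := by rw [hk]; exact mul_dvd_mul_left e hqk
        have h2 : q * e ∣ q * X := by rw [← hmX]; rwa [mul_comm] at h1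
        exact (mul_dvd_mul_iff_left hq.pos.ne').mp h2
      have hfin : Deficient (e * p) := by
        have hX0 : 0 < X := hX ▸ Nat.mul_pos (pow_pos hq.pos _) hn0
        exact Deficient.of_dvd (Nat.mul_pos hX0 hp0) (mul_dvd_mul heX dvd_rfl) hXp
      rwa [mul_comm] at hfin
    · -- d ∣ m
      have hdp : Nat.Coprime d p := ((Nat.Prime.coprime_iff_not_dvd hp).mpr hpd).symm
      have hdm : d ∣ m := (Nat.Coprime.dvd_of_dvd_mul_right hdp) hdvd
      exact Deficient.of_dvd hm hdm hdef
end

section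
/- (Deficient sequence completion) Let m ≥ 2 be a deficient natural number with largest prime factor P, and suppose c(m) ≥ P (i.e., σ(m) ≥ P·d(m)). Then there exist primes p, q with P < p < q such that m·p is deficient and m·p·q is abundant. Moreover, if m is squarefree, then m·p·q is primitive abundant. -/
/-!
Let `c = σ(m)/d(m)` be the center of `m` and `n = ⌊c⌋`. For a prime `p ∤ m`, `m p` is deficient
iff `c < p`; for a second prime `q ∤ m p`, `m p q` is abundant iff `p q < c (p + q + 1)`. Any two
primes `n < p < q ≤ 2n` satisfy both, and they exist for `n ≥ 6` by the estimate of `C(2n, n)`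
behind Bertrand's postulate: were `p` the only prime in `(n, 2n]`, its factor `≤ 2n` in `C(2n, n)`
is paid for by there being at most `√(2n) - 1` primes up to `√(2n)`, and Bertrand's inequality
still contradicts `4ⁿ < n C(2n, n)`.

For squarefree `m`, a proper divisor of `m p q` not divisible by `q` divides the deficient number
`m p`. One divisible by `q` is `e q` with `e ∣ u`, where `u r = m p` for a prime `r < q`, so its
abundancy index `h = σ(·)/·` satisfies `h(e q) ≤ h(u) (1 + 1/q) < h(u) (1 + 1/r) = h(m p) < 2`.
-/

section TwoPrimes

open Finset Nat

theorem centralBinom_le_pow_card_mul_four_pow {n : ℕ} (hn : 2 < n) :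
    centralBinom n ≤
      (2 * n) ^ #{p ∈ range (2 * n + 1) | p.Prime ∧ (p ≤ sqrt (2 * n) ∨ n < p)} *
        4 ^ (2 * n / 3) := by
  set v := (centralBinom n).factorization
  have hpoint : ∀ p ∈ range (2 * n + 1), p ^ v p ≤
      (if p.Prime ∧ (p ≤ sqrt (2 * n) ∨ n < p) then 2 * n else 1) *
        (if p.Prime ∧ p ≤ 2 * n / 3 then p else 1) := by
    intro p _
    by_cases hp : p.Prime
    swap
    · rw [factorization_eq_zero_of_not_prime _ hp, pow_zero]
      simp [hp]
    simp only [hp, true_and]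
    by_cases hout : p ≤ sqrt (2 * n) ∨ n < p
    · rw [if_pos hout]
      exact (pow_factorization_choose_le (by omega)).trans
        (Nat.le_mul_of_pos_right _ (by split_ifs; exacts [hp.pos, one_pos]))
    rw [if_neg hout, one_mul]
    split_ifs with hsmall
    · exact (pow_le_pow_right₀ hp.one_lt.le (factorization_choose_le_one
        (sqrt_lt'.mp (by omega)))).trans_eq (pow_one p)
    · rw [factorization_centralBinom_of_two_mul_self_lt_three_mul hn (by omega) (by omega),
        pow_zero]
  calc centralBinom n = ∏ p ∈ range (2 * n + 1), p ^ v p :=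
        (prod_pow_factorization_centralBinom n).symm
    _ ≤ _ := prod_le_prod' hpoint
    _ ≤ _ := by
        rw [prod_mul_distrib, ← prod_filter, ← prod_filter, prod_const]
        gcongr
        refine le_trans (le_of_eq ?_) (primorial_le_four_pow _)
        rw [primorial]
        congr 1
        ext p
        simp only [mem_filter, mem_range]
        exact ⟨fun ⟨_, hp, _⟩ => ⟨by omega, hp⟩, fun ⟨_, hp⟩ => ⟨by omega, hp, by omega⟩⟩

theorem card_primes_le_sqrt_or_gt_le {n : ℕ} (hn : 0 < n)
    (h : #{p ∈ Ioc n (2 * n) | p.Prime} ≤ 1) :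
    #{p ∈ range (2 * n + 1) | p.Prime ∧ (p ≤ sqrt (2 * n) ∨ n < p)} ≤ sqrt (2 * n) := by
  have hsmall : #{p ∈ range (2 * n + 1) | p.Prime ∧ p ≤ sqrt (2 * n)} ≤ sqrt (2 * n) - 1 := by
    refine (card_le_card fun p hp => ?_).trans (card_Icc 2 _).le
    simp only [mem_filter, mem_Icc] at hp ⊢
    exact ⟨hp.2.1.two_le, hp.2.2⟩
  have hlarge : #{p ∈ range (2 * n + 1) | p.Prime ∧ n < p} ≤ 1 := by
    refine (card_le_card fun p hp => ?_).trans h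
    simp only [mem_filter, mem_range, mem_Ioc] at hp ⊢
    exact ⟨⟨hp.2.2, by omega⟩, hp.2.1⟩
  have hsqrt : 0 < sqrt (2 * n) := sqrt_pos.mpr (by omega)
  simp only [and_or_left, filter_or]
  grw [card_union_le]
  omega

theorem one_lt_card_primes_Ioc_of_le {n : ℕ} (hn : 512 ≤ n) :
    1 < #{p ∈ Ioc n (2 * n) | p.Prime} := by
  by_contra! h
  have hB := centralBinom_le_pow_card_mul_four_pow (n := n) (by omega)
  grw [card_primes_le_sqrt_or_gt_le (by omega) h] at hB
  · have := four_pow_lt_mul_centralBinom n (by omega)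
    grw [hB, ← mul_assoc, bertrand_main_inequality hn] at this
    exact lt_irrefl _ this
  · omega

theorem one_lt_card_primes_Ioc_step {n : ℕ} (a b c : ℕ)
    (habc : b.Prime ∧ c.Prime ∧ b < c ∧ c ≤ 2 * a)
    (H : n < a → 1 < #{p ∈ Ioc n (2 * n) | p.Prime}) :
    n < b → 1 < #{p ∈ Ioc n (2 * n) | p.Prime} := by
  obtain ⟨hb, hc, hbc, hca⟩ := habc
  intro hnb
  rcases lt_or_ge n a with hna | han
  · exact H hna
  refine one_lt_card_iff.mpr ⟨b, c, ?_, ?_, hbc.ne⟩ <;> simp only [mem_filter, mem_Ioc]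
  exacts [⟨⟨hnb, by omega⟩, hb⟩, ⟨⟨by omega, by omega⟩, hc⟩]

theorem one_lt_card_primes_Ioc {n : ℕ} (hn : 6 ≤ n) :
    1 < #{p ∈ Ioc n (2 * n) | p.Prime} := by
  rcases le_or_gt 512 n with h | h
  · exact one_lt_card_primes_Ioc_of_le h
  refine one_lt_card_primes_Ioc_step 311 613 617 (by norm_num) ?_ (by omega)
  refine one_lt_card_primes_Ioc_step 157 311 313 (by norm_num) ?_
  refine one_lt_card_primes_Ioc_step 83 157 163 (by norm_num) ?_
  refine one_lt_card_primes_Ioc_step 47 83 89 (by norm_num) ?_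
  refine one_lt_card_primes_Ioc_step 29 47 53 (by norm_num) ?_
  refine one_lt_card_primes_Ioc_step 17 29 31 (by norm_num) ?_
  refine one_lt_card_primes_Ioc_step 11 17 19 (by norm_num) ?_
  refine one_lt_card_primes_Ioc_step 7 11 13 (by norm_num) ?_
  refine one_lt_card_primes_Ioc_step 6 7 11 (by norm_num) ?_
  omega

theorem exists_primes_mul_lt {n : ℕ} (hn : 2 ≤ n) :
    ∃ p q : ℕ, p.Prime ∧ q.Prime ∧ n < p ∧ p < q ∧ p * q < n * (p + q + 1) := by
  rcases lt_or_ge n 6 with h | h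
  · interval_cases n
    exacts [⟨3, 5, by norm_num⟩, ⟨5, 7, by norm_num⟩, ⟨5, 7, by norm_num⟩, ⟨7, 11, by norm_num⟩]
  obtain ⟨p, q, hp, hq, hpq⟩ := one_lt_card_iff.mp (one_lt_card_primes_Ioc h)
  wlog hlt : p < q generalizing p q
  · exact this q p hq hp hpq.symm (by omega)
  simp only [mem_filter, mem_Ioc] at hp hq
  refine ⟨p, q, hp.2, hq.2, hp.1.1, hlt, ?_⟩
  nlinarith [Nat.mul_le_mul (Nat.sub_le_sub_right hp.1.2 n) (Nat.sub_le_sub_right hq.1.2 n)]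

end TwoPrimes

theorem sigma1_mul_prime {n p : ℕ} (hp : p.Prime) (hpn : ¬p ∣ n) :
    sigma1 (n * p) = sigma1 n * (p + 1) := by
  rw [sigma1, (hp.coprime_iff_not_dvd.mpr hpn).symm.sum_divisors_mul,
    hp.sum_divisors, sigma1]

theorem abundancyIndex_mul_prime {n p : ℕ} (hp : p.Prime) (hpn : ¬p ∣ n) :
    (n * p).abundancyIndex = n.abundancyIndex * ((p + 1) / p) := by
  have hp0 : (p : ℚ) ≠ 0 := by exact_mod_cast hp.ne_zero
  simp only [Nat.abundancyIndex]
  rw [← sigma1, ← sigma1, sigma1_mul_prime hp hpn]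
  push_cast
  field_simp

theorem one_le_abundancyIndex {n : ℕ} (hn : n ≠ 0) : 1 ≤ n.abundancyIndex :=
  (by simp [Nat.abundancyIndex] : (1 : ℕ).abundancyIndex = 1) ▸
    Nat.abundancyIndex_le_of_dvd hn (one_dvd n)

theorem Deficient.ne_zero {n : ℕ} (h : Deficient n) : n ≠ 0 := by
  rintro rfl
  simp [Deficient] at h

theorem deficient_iff_abundancyIndex_lt_two {n : ℕ} (hn : n ≠ 0) :
    Deficient n ↔ n.abundancyIndex < 2 := by
  rw [Deficient, Nat.abundancyIndex, div_lt_iff₀ (by positivity), sigma1]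
  norm_cast

theorem Deficient.of_dvd_s14 {m n : ℕ} (h : Deficient n) (hmn : m ∣ n) : Deficient m := by
  have hm : m ≠ 0 := ne_zero_of_dvd_ne_zero h.ne_zero hmn
  rw [deficient_iff_abundancyIndex_lt_two hm]
  exact (Nat.abundancyIndex_le_of_dvd h.ne_zero hmn).trans_lt
    ((deficient_iff_abundancyIndex_lt_two h.ne_zero).mp h)

theorem deficient_mul_prime_iff {m p : ℕ} (hm : Deficient m) (hp : p.Prime) (hpm : ¬p ∣ m) :
    Deficient (m * p) ↔ center m < p := by
  have hd : (0 : ℚ) < 2 * m - sigma1 m := sub_pos.mpr (by exact_mod_cast hm)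
  rw [center, div_lt_iff₀ hd, Deficient, sigma1_mul_prime hp hpm, ← Nat.cast_lt (α := ℚ)]
  push_cast
  constructor <;> intro h <;> linarith

theorem abundant_mul_prime_mul_prime_iff {m p q : ℕ} (hm : Deficient m) (hp : p.Prime)
    (hq : q.Prime) (hpm : ¬p ∣ m) (hqm : ¬q ∣ m) (hpq : p ≠ q) :
    Abundant (m * p * q) ↔ (p * q : ℚ) < center m * (p + q + 1) := by
  have hqmp : ¬q ∣ m * p := fun h => (hq.dvd_mul.mp h).elim hqm
    fun h => hpq ((Nat.prime_dvd_prime_iff_eq hq hp).mp h).symm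
  have hd : (0 : ℚ) < 2 * m - sigma1 m := sub_pos.mpr (by exact_mod_cast hm)
  rw [center, div_mul_eq_mul_div, lt_div_iff₀ hd, Abundant, sigma1_mul_prime hq hqmp,
    sigma1_mul_prime hp hpm, ← Nat.cast_lt (α := ℚ)]
  push_cast
  constructor <;> intro h <;> linarith

theorem deficient_mul_prime_of_dvd {u r e q : ℕ} (hdef : Deficient (u * r)) (hr : r.Prime)
    (hru : ¬r ∣ u) (hq : q.Prime) (hrq : r < q) (heu : e ∣ u) (hqe : ¬q ∣ e) :
    Deficient (e * q) := by
  have hu : u ≠ 0 := left_ne_zero_of_mul hdef.ne_zero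
  have he : e ≠ 0 := ne_zero_of_dvd_ne_zero hu heu
  have hq0 : (0 : ℚ) < q := by exact_mod_cast hq.pos
  have hr0 : (0 : ℚ) < r := by exact_mod_cast hr.pos
  have hfactor : ((q + 1) / q : ℚ) < (r + 1) / r := by
    rw [div_lt_div_iff₀ hq0 hr0]
    have : (r : ℚ) < q := by exact_mod_cast hrq
    linarith
  rw [deficient_iff_abundancyIndex_lt_two (mul_ne_zero he hq.ne_zero),
    abundancyIndex_mul_prime hq hqe]
  rw [deficient_iff_abundancyIndex_lt_two hdef.ne_zero, abundancyIndex_mul_prime hr hru] at hdef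
  calc e.abundancyIndex * ((q + 1) / q) ≤ u.abundancyIndex * ((q + 1) / q) := by
        gcongr
        exact Nat.abundancyIndex_le_of_dvd hu heu
    _ < u.abundancyIndex * ((r + 1) / r) := by
        gcongr
        exact zero_lt_one.trans_le (one_le_abundancyIndex hu)
    _ < 2 := hdef

theorem primitiveAbundant_mul_prime {N q : ℕ} (hN : Squarefree N) (hdef : Deficient N)
    (hq : q.Prime) (hlt : ∀ r, r.Prime → r ∣ N → r < q) (hab : Abundant (N * q)) :
    PrimitiveAbundant (N * q) := by
  refine ⟨hab, fun t ht => ?_⟩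
  obtain ⟨htdvd, htlt⟩ := Nat.mem_properDivisors.mp ht
  have hqN : ¬q ∣ N := fun h => (hlt q hq h).false
  by_cases hqt : q ∣ t
  swap
  · exact hdef.of_dvd_s14 ((hq.coprime_iff_not_dvd.mpr hqt).symm.dvd_of_dvd_mul_right htdvd)
  obtain ⟨e, rfl⟩ := hqt
  have heN : e ∣ N := (Nat.mul_dvd_mul_iff_left hq.pos).mp (mul_comm N q ▸ htdvd)
  obtain ⟨k, hk⟩ := heN
  have hk1 : k ≠ 1 := by
    rintro rfl
    rw [mul_one] at hk
    rw [hk, mul_comm] at htlt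
    exact htlt.false
  obtain ⟨r, hr, j, rfl⟩ := Nat.exists_prime_and_dvd hk1
  have hN' : N = e * j * r := by rw [hk]; ring
  have hru : ¬r ∣ e * j := fun h => hr.one_lt.ne'
    (Nat.isUnit_iff.mp (hN r (hN' ▸ mul_dvd_mul_right h r)))
  rw [mul_comm q e]
  exact deficient_mul_prime_of_dvd (hN' ▸ hdef) hr hru hq
    (hlt r hr (hN' ▸ dvd_mul_left r _)) (dvd_mul_right e j)
    (fun h => hqN (h.trans (hk ▸ dvd_mul_right e _)))

theorem stmt14_general (m P : ℕ) (hdef : Deficient m)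
    (hP : P.Prime) (hPmax : ∀ q : ℕ, q.Prime → q ∣ m → q ≤ P)
    (hc : (P : ℚ) ≤ center m) :
    ∃ p q : ℕ, p.Prime ∧ q.Prime ∧ P < p ∧ p < q ∧
      Deficient (m * p) ∧ Abundant (m * p * q) ∧
      (Squarefree m → PrimitiveAbundant (m * p * q)) := by
  have hc0 : 0 ≤ center m := P.cast_nonneg.trans hc
  obtain ⟨p, q, hp, hq, hnp, hpq, hmul⟩ :=
    exists_primes_mul_lt (hP.two_le.trans (Nat.le_floor hc))
  have hcp : center m < p := (Nat.lt_floor_add_one _).trans_le (by exact_mod_cast hnp)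
  have hPp : P < p := by exact_mod_cast hc.trans_lt hcp
  have hpm : ¬p ∣ m := fun h => (hPmax p hp h).not_gt hPp
  have hqm : ¬q ∣ m := fun h => (hPmax q hq h).not_gt (hPp.trans hpq)
  have hmp : Deficient (m * p) := (deficient_mul_prime_iff hdef hp hpm).mpr hcp
  have hmpq : Abundant (m * p * q) := by
    refine (abundant_mul_prime_mul_prime_iff hdef hp hq hpm hqm hpq.ne).mpr ?_
    calc (p * q : ℚ) < ⌊center m⌋₊ * (p + q + 1) := by exact_mod_cast hmul
      _ ≤ center m * (p + q + 1) := by gcongr; exact Nat.floor_le hc0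
  refine ⟨p, q, hp, hq, hPp, hpq, hmp, hmpq, fun hsf => ?_⟩
  refine primitiveAbundant_mul_prime ?_ hmp hq (fun r hr hrmp => ?_) hmpq
  · exact (Nat.squarefree_mul ((hp.coprime_iff_not_dvd.mpr hpm).symm)).mpr ⟨hsf, hp.squarefree⟩
  · rcases hr.dvd_mul.mp hrmp with hrm | hrp
    · exact ((hPmax r hr hrm).trans_lt hPp).trans hpq
    · exact (Nat.le_of_dvd hp.pos hrp).trans_lt hpq

/-- Deficient sequence completion: if `m ≥ 2` is deficient with largest prime
factor `P` and `c(m) ≥ P`, then there are primes `P < p < q` with `m·p`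
deficient and `m·p·q` abundant; if moreover `m` is squarefree, `m·p·q` is
primitive abundant. -/
theorem stmt14 (m P : ℕ) (hm : 2 ≤ m) (hdef : Deficient m)
    (hP : P.Prime) (hPdvd : P ∣ m) (hPmax : ∀ q : ℕ, q.Prime → q ∣ m → q ≤ P)
    (hc : (P : ℚ) ≤ center m) :
    ∃ p q : ℕ, p.Prime ∧ q.Prime ∧ P < p ∧ p < q ∧
      Deficient (m * p) ∧ Abundant (m * p * q) ∧
      (Squarefree m → PrimitiveAbundant (m * p * q)) :=
  stmt14_general m P hdef hP hPmax hc
end
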